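/- Let η^{αβ} be a constant symmetric invertible real n×n matrix, let F be a smooth solution of the associativity (WDVV-type) equations on ℝⁿ, let λ, μ ∈ ℝ with λ + μ ≠ 0, and let χ_λ and χ_μ be smooth solutions of the Gauss–Manin equations with parameters λ and μ respectively. Define Ξ = (λμ/(λ+μ)) η^{νβ} ∂_β χ_λ ∂_ν χ_μ. Then the pair (G, Ξ) with G = χ_λ satisfies the linearization of the Gauss–Manin equations with parameter μ: ∂_α∂_γ Ξ = μ η^{ρν} ∂_α∂_γ∂_ρ G ∂_ν χ_μ + μ η^{ρν} ∂_α∂_γ∂_ρ F ∂_ν Ξ for all α,γ. -/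

import Mathlib

/-- Partial derivative of `f` in the `i`-th coordinate direction on `ℝⁿ`. -/
noncomputable def pd {n : ℕ} (i : Fin n) (f : (Fin n → ℝ) → ℝ) : (Fin n → ℝ) → ℝ :=
  fun x => fderiv ℝ f x (Pi.single i 1)

section Helpers

variable {n : ℕ}

lemma contDiff_pd {f : (Fin n → ℝ) → ℝ} (hf : ContDiff ℝ (⊤ : ℕ∞) f) (i : Fin n) :
    ContDiff ℝ (⊤ : ℕ∞) (pd i f) :=
  (hf.fderiv_right (by simp)).clm_apply contDiff_const

lemma pd_const_mul {g : (Fin n → ℝ) → ℝ} (hg : Differentiable ℝ g) (c : ℝ) (i : Fin n)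
    (x : Fin n → ℝ) :
    pd i (fun y => c * g y) x = c * pd i g x := by
  simp [pd, fderiv_const_mul (hg x) c]

lemma pd_sum {ι : Type} (s : Finset ι) {g : ι → (Fin n → ℝ) → ℝ}
    (hg : ∀ j ∈ s, Differentiable ℝ (g j)) (i : Fin n) (x : Fin n → ℝ) :
    pd i (fun y => ∑ j ∈ s, g j y) x = ∑ j ∈ s, pd i (g j) x := by
  simp [pd, fderiv_fun_sum (fun j hj => (hg j hj x))]

lemma pd_mul {g h : (Fin n → ℝ) → ℝ} (hg : Differentiable ℝ g) (hh : Differentiable ℝ h)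
    (i : Fin n) (x : Fin n → ℝ) :
    pd i (fun y => g y * h y) x = pd i g x * h x + g x * pd i h x := by
  simp [pd, fderiv_fun_mul (hg x) (hh x)]; ring

lemma pd_comm {f : (Fin n → ℝ) → ℝ} (hf : ContDiff ℝ (⊤ : ℕ∞) f) (i j : Fin n) (x : Fin n → ℝ) :
    pd i (pd j f) x = pd j (pd i f) x := by
  have hdf : ContDiff ℝ (⊤ : ℕ∞) (fderiv ℝ f) := hf.fderiv_right (by simp)
  have key : ∀ a b : Fin n, pd a (pd b f) x
      = fderiv ℝ (fderiv ℝ f) x (Pi.single a 1) (Pi.single b 1) := by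
    intro a b
    show fderiv ℝ (fun y => fderiv ℝ f y (Pi.single b 1)) x (Pi.single a 1) = _
    rw [fderiv_clm_apply (hdf.differentiable (by simp) x) (differentiableAt_const _)]
    simp
  rw [key i j, key j i]
  exact second_derivative_symmetric (f' := fderiv ℝ f)
    (fun y => (hf.differentiable (by simp) y).hasFDerivAt)
    ((hdf.differentiable (by simp) x).hasFDerivAt) _ _

abbrev X4 (n : ℕ) := Fin n × Fin n × Fin n × Fin n
abbrev X6 (n : ℕ) := Fin n × Fin n × Fin n × Fin n × Fin n × Fin n

lemma sum4 (f : Fin n → Fin n → Fin n → Fin n → ℝ) :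
    ∑ a, ∑ b, ∑ c, ∑ d, f a b c d
      = ∑ p : X4 n, f p.1 p.2.1 p.2.2.1 p.2.2.2 := by
  simp only [Fintype.sum_prod_type]

lemma sum6 (f : Fin n → Fin n → Fin n → Fin n → Fin n → Fin n → ℝ) :
    ∑ a, ∑ b, ∑ c, ∑ d, ∑ e, ∑ g, f a b c d e g
      = ∑ p : X6 n, f p.1 p.2.1 p.2.2.1 p.2.2.2.1 p.2.2.2.2.1 p.2.2.2.2.2 := by
  simp only [Fintype.sum_prod_type]

/-- `PP η F g a b x = ∑ η^{st} ∂a∂b∂s F ∂t g`. -/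
noncomputable def PP (η : Matrix (Fin n) (Fin n) ℝ) (F g : (Fin n → ℝ) → ℝ)
    (a b : Fin n) : (Fin n → ℝ) → ℝ :=
  fun x => ∑ s, ∑ t, η s t * pd a (pd b (pd s F)) x * pd t g x

/-- `TT η F g h a x = ∑ η^{νβ} (PP η F g a β) ∂ν h`. -/
noncomputable def TT (η : Matrix (Fin n) (Fin n) ℝ) (F g h : (Fin n → ℝ) → ℝ)
    (a : Fin n) : (Fin n → ℝ) → ℝ :=
  fun x => ∑ ν, ∑ β, η ν β * PP η F g a β x * pd ν h x

noncomputable def Xi (η : Matrix (Fin n) (Fin n) ℝ) (g h : (Fin n → ℝ) → ℝ)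
    (c : ℝ) : (Fin n → ℝ) → ℝ :=
  fun y => c * ∑ ν, ∑ β, η ν β * pd β g y * pd ν h y

lemma contDiff_PP (η : Matrix (Fin n) (Fin n) ℝ) {F g : (Fin n → ℝ) → ℝ}
    (hF : ContDiff ℝ (⊤ : ℕ∞) F) (hg : ContDiff ℝ (⊤ : ℕ∞) g) (a b : Fin n) :
    ContDiff ℝ (⊤ : ℕ∞) (PP η F g a b) :=
  ContDiff.sum fun s _ => ContDiff.sum fun t _ =>
    (contDiff_const.mul (contDiff_pd (contDiff_pd (contDiff_pd hF s) b) a)).mul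
      (contDiff_pd hg t)

lemma contDiff_TT (η : Matrix (Fin n) (Fin n) ℝ) {F g h : (Fin n → ℝ) → ℝ}
    (hF : ContDiff ℝ (⊤ : ℕ∞) F) (hg : ContDiff ℝ (⊤ : ℕ∞) g) (hh : ContDiff ℝ (⊤ : ℕ∞) h) (a : Fin n) :
    ContDiff ℝ (⊤ : ℕ∞) (TT η F g h a) :=
  ContDiff.sum fun ν _ => ContDiff.sum fun β _ =>
    (contDiff_const.mul (contDiff_PP η hF hg a β)).mul (contDiff_pd hh ν)

lemma contDiff_bilin (η : Matrix (Fin n) (Fin n) ℝ) {g h : (Fin n → ℝ) → ℝ}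
    (hg : ContDiff ℝ (⊤ : ℕ∞) g) (hh : ContDiff ℝ (⊤ : ℕ∞) h) :
    ContDiff ℝ (⊤ : ℕ∞) (fun y => ∑ ν, ∑ β, η ν β * pd β g y * pd ν h y) :=
  ContDiff.sum fun ν _ => ContDiff.sum fun β _ =>
    (contDiff_const.mul (contDiff_pd hg β)).mul (contDiff_pd hh ν)

lemma pd_bilin (η : Matrix (Fin n) (Fin n) ℝ) {g h : (Fin n → ℝ) → ℝ}
    (hg : ContDiff ℝ (⊤ : ℕ∞) g) (hh : ContDiff ℝ (⊤ : ℕ∞) h) (δ : Fin n) (y : Fin n → ℝ) :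
    pd δ (fun z => ∑ ν, ∑ β, η ν β * pd β g z * pd ν h z) y
      = ∑ ν, ∑ β, η ν β * (pd δ (pd β g) y * pd ν h y + pd β g y * pd δ (pd ν h) y) := by
  have h1 : pd δ (fun z => ∑ ν, ∑ β, η ν β * pd β g z * pd ν h z) y
      = ∑ ν, pd δ (fun z => ∑ β, η ν β * pd β g z * pd ν h z) y :=
    pd_sum Finset.univ (fun ν _ => (ContDiff.sum fun β _ =>
      (contDiff_const.mul (contDiff_pd hg β)).mul (contDiff_pd hh ν)).differentiable (by simp)) δ y
  rw [h1]
  refine Finset.sum_congr rfl fun ν _ => ?_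
  have h2 : pd δ (fun z => ∑ β, η ν β * pd β g z * pd ν h z) y
      = ∑ β, pd δ (fun z => η ν β * pd β g z * pd ν h z) y :=
    pd_sum Finset.univ (fun β _ =>
      ((contDiff_const.mul (contDiff_pd hg β)).mul (contDiff_pd hh ν)).differentiable (by simp)) δ y
  rw [h2]
  refine Finset.sum_congr rfl fun β _ => ?_
  have h3 : pd δ (fun z => η ν β * pd β g z * pd ν h z) y
      = pd δ (fun z => η ν β * pd β g z) y * pd ν h y
        + (η ν β * pd β g y) * pd δ (pd ν h) y :=
    pd_mul ((contDiff_const.mul (contDiff_pd hg β)).differentiable (by simp))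
      ((contDiff_pd hh ν).differentiable (by simp)) δ y
  have h4 : pd δ (fun z => η ν β * pd β g z) y = η ν β * pd δ (pd β g) y :=
    pd_const_mul ((contDiff_pd hg β).differentiable (by simp)) _ δ y
  rw [h3, h4]; ring

lemma pd_PP (η : Matrix (Fin n) (Fin n) ℝ) {F g : (Fin n → ℝ) → ℝ}
    (hF : ContDiff ℝ (⊤ : ℕ∞) F) (hg : ContDiff ℝ (⊤ : ℕ∞) g) (δ a b : Fin n) (x : Fin n → ℝ) :
    pd δ (PP η F g a b) x
      = ∑ s, ∑ t, η s t * (pd δ (pd a (pd b (pd s F))) x * pd t g x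
          + pd a (pd b (pd s F)) x * pd δ (pd t g) x) := by
  have hA : ∀ s, ContDiff ℝ (⊤ : ℕ∞) (pd a (pd b (pd s F))) := fun s =>
    contDiff_pd (contDiff_pd (contDiff_pd hF s) b) a
  have h1 : pd δ (PP η F g a b) x
      = ∑ s, pd δ (fun y => ∑ t, η s t * pd a (pd b (pd s F)) y * pd t g y) x :=
    pd_sum Finset.univ (fun s _ => (ContDiff.sum fun t _ =>
      (contDiff_const.mul (hA s)).mul (contDiff_pd hg t)).differentiable (by simp)) δ x
  rw [h1]
  refine Finset.sum_congr rfl fun s _ => ?_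
  have h2 : pd δ (fun y => ∑ t, η s t * pd a (pd b (pd s F)) y * pd t g y) x
      = ∑ t, pd δ (fun y => η s t * pd a (pd b (pd s F)) y * pd t g y) x :=
    pd_sum Finset.univ (fun t _ =>
      ((contDiff_const.mul (hA s)).mul (contDiff_pd hg t)).differentiable (by simp)) δ x
  rw [h2]
  refine Finset.sum_congr rfl fun t _ => ?_
  have h3 : pd δ (fun y => η s t * pd a (pd b (pd s F)) y * pd t g y) x
      = pd δ (fun y => η s t * pd a (pd b (pd s F)) y) x * pd t g x
        + (η s t * pd a (pd b (pd s F)) x) * pd δ (pd t g) x :=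
    pd_mul ((contDiff_const.mul (hA s)).differentiable (by simp))
      ((contDiff_pd hg t).differentiable (by simp)) δ x
  have h4 : pd δ (fun y => η s t * pd a (pd b (pd s F)) y) x
      = η s t * pd δ (pd a (pd b (pd s F))) x :=
    pd_const_mul ((hA s).differentiable (by simp)) _ δ x
  rw [h3, h4]; ring

lemma pd_TT (η : Matrix (Fin n) (Fin n) ℝ) {F g h : (Fin n → ℝ) → ℝ}
    (hF : ContDiff ℝ (⊤ : ℕ∞) F) (hg : ContDiff ℝ (⊤ : ℕ∞) g) (hh : ContDiff ℝ (⊤ : ℕ∞) h)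
    (δ a : Fin n) (x : Fin n → ℝ) :
    pd δ (TT η F g h a) x
      = ∑ ν, ∑ β, η ν β * (pd δ (PP η F g a β) x * pd ν h x
          + PP η F g a β x * pd δ (pd ν h) x) := by
  have h1 : pd δ (TT η F g h a) x
      = ∑ ν, pd δ (fun y => ∑ β, η ν β * PP η F g a β y * pd ν h y) x :=
    pd_sum Finset.univ (fun ν _ => (ContDiff.sum fun β _ =>
      (contDiff_const.mul (contDiff_PP η hF hg a β)).mul (contDiff_pd hh ν)).differentiable
        (by simp)) δ x
  rw [h1]
  refine Finset.sum_congr rfl fun ν _ => ?_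
  have h2 : pd δ (fun y => ∑ β, η ν β * PP η F g a β y * pd ν h y) x
      = ∑ β, pd δ (fun y => η ν β * PP η F g a β y * pd ν h y) x :=
    pd_sum Finset.univ (fun β _ =>
      ((contDiff_const.mul (contDiff_PP η hF hg a β)).mul
        (contDiff_pd hh ν)).differentiable (by simp)) δ x
  rw [h2]
  refine Finset.sum_congr rfl fun β _ => ?_
  have h3 : pd δ (fun y => η ν β * PP η F g a β y * pd ν h y) x
      = pd δ (fun y => η ν β * PP η F g a β y) x * pd ν h x
        + (η ν β * PP η F g a β x) * pd δ (pd ν h) x :=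
    pd_mul ((contDiff_const.mul (contDiff_PP η hF hg a β)).differentiable (by simp))
      ((contDiff_pd hh ν).differentiable (by simp)) δ x
  have h4 : pd δ (fun y => η ν β * PP η F g a β y) x = η ν β * pd δ (PP η F g a β) x :=
    pd_const_mul ((contDiff_PP η hF hg a β).differentiable (by simp)) _ δ x
  rw [h3, h4]; ring

/-- Renaming lemma for the metric pairing. -/
lemma CL1 (η : Matrix (Fin n) (Fin n) ℝ) (hη : ∀ a b, η a b = η b a)
    (Q v : Fin n → ℝ) :
    ∑ a, ∑ b, η a b * Q b * v a = ∑ a, ∑ b, η a b * Q a * v b := by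
  rw [Finset.sum_comm]
  refine Finset.sum_congr rfl fun a _ => Finset.sum_congr rfl fun b _ => ?_
  rw [hη b a]

/-- Index lemma for Step A. -/
lemma IL1 (η : Matrix (Fin n) (Fin n) ℝ) (hη : ∀ a b, η a b = η b a)
    (A : Fin n → Fin n → ℝ) (hA : ∀ a b, A a b = A b a) (u v : Fin n → ℝ) :
    ∑ ν, ∑ β, η ν β * u β * (∑ s, ∑ t, η s t * A ν s * v t)
      = ∑ ν, ∑ β, η ν β * (∑ s, ∑ t, η s t * A β s * u t) * v ν := by
  have L : (∑ ν, ∑ β, η ν β * u β * (∑ s, ∑ t, η s t * A ν s * v t))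
      = ∑ ν, ∑ β, ∑ s, ∑ t, η ν β * u β * (η s t * A ν s * v t) := by
    simp only [Finset.mul_sum]
  have R : (∑ ν, ∑ β, η ν β * (∑ s, ∑ t, η s t * A β s * u t) * v ν)
      = ∑ ν, ∑ β, ∑ s, ∑ t, η ν β * (η s t * A β s * u t) * v ν := by
    simp only [Finset.mul_sum, Finset.sum_mul]
  rw [L, R, sum4, sum4]
  refine Fintype.sum_bijective
    (fun z : X4 n => ((z.2.2.2, z.2.2.1, z.1, z.2.1) : X4 n))
    (Equiv.mk (fun z : X4 n => ((z.2.2.2, z.2.2.1, z.1, z.2.1) : X4 n))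
      (fun w => (w.2.2.1, w.2.2.2, w.2.1, w.1)) (fun z => rfl) (fun w => rfl)).bijective
    _ _ (fun z => ?_)
  obtain ⟨ν, β, s, t⟩ := z
  show η ν β * u β * (η s t * A ν s * v t) = η t s * (η ν β * A s ν * u β) * v t
  rw [hA s ν, hη t s]; ring

/-- The main WDVV index lemma. -/
lemma IL2 (η : Matrix (Fin n) (Fin n) ℝ) (hη : ∀ a b, η a b = η b a)
    (B : Fin n → Fin n → Fin n → ℝ)
    (hB12 : ∀ a b c, B a b c = B b a c)
    (hB23 : ∀ a b c, B a b c = B a c b)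
    (hW : ∀ a b c d, (∑ δ, ∑ e, B a b δ * η δ e * B e c d)
        = ∑ δ, ∑ e, B a c δ * η δ e * B e b d)
    (u v : Fin n → ℝ) (α γ : Fin n) :
    ∑ ν, ∑ β, η ν β * (∑ s, ∑ t, η s t * B γ β s * u t)
        * (∑ p, ∑ q, η p q * B α ν p * v q)
      = ∑ ρ, ∑ ν, η ρ ν * B α γ ρ
          * (∑ κ, ∑ β, η κ β * (∑ s, ∑ t, η s t * B ν β s * u t) * v κ) := by
  have hrot : ∀ a b c, B a b c = B c a b := fun a b c => by
    rw [hB23 a b c, hB12 a c b]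
  have hswap : ∀ a b c d, (∑ δ, ∑ e, B a b δ * η δ e * B e c d)
      = ∑ δ, ∑ e, B c d δ * η δ e * B e a b := by
    intro a b c d
    rw [Finset.sum_comm]
    refine Finset.sum_congr rfl fun x _ => Finset.sum_congr rfl fun y _ => ?_
    rw [hrot c d x, ← hrot a b y, hη x y]; ring
  have key : ∀ s p, (∑ δ, ∑ e, B γ s δ * η δ e * B e α p)
      = ∑ δ, ∑ e, B α γ δ * η δ e * B e p s := by
    intro s p
    rw [hswap γ s α p]
    exact hW α p γ s
  -- flatten LHS
  have L1 : (∑ ν, ∑ β, η ν β * (∑ s, ∑ t, η s t * B γ β s * u t)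
        * (∑ p, ∑ q, η p q * B α ν p * v q))
      = ∑ ν, ∑ β, ∑ p, ∑ q, ∑ s, ∑ t,
          η ν β * (η s t * B γ β s * u t) * (η p q * B α ν p * v q) := by
    refine Finset.sum_congr rfl fun ν _ => Finset.sum_congr rfl fun β _ => ?_
    simp only [Finset.mul_sum, Finset.sum_mul]
  have T1 : (∑ s, ∑ t, ∑ p, ∑ q, η s t * η p q * u t * v q
        * (∑ δ, ∑ e, B γ s δ * η δ e * B e α p))
      = ∑ s, ∑ t, ∑ p, ∑ q, ∑ δ, ∑ e,
          η s t * η p q * u t * v q * (B γ s δ * η δ e * B e α p) := by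
    simp only [Finset.mul_sum]
  have T2 : (∑ s, ∑ t, ∑ p, ∑ q, η s t * η p q * u t * v q
        * (∑ δ, ∑ e, B α γ δ * η δ e * B e p s))
      = ∑ s, ∑ t, ∑ p, ∑ q, ∑ δ, ∑ e,
          η s t * η p q * u t * v q * (B α γ δ * η δ e * B e p s) := by
    simp only [Finset.mul_sum]
  have R1 : (∑ ρ, ∑ ν, η ρ ν * B α γ ρ
        * (∑ κ, ∑ β, η κ β * (∑ s, ∑ t, η s t * B ν β s * u t) * v κ))
      = ∑ ρ, ∑ ν, ∑ κ, ∑ β, ∑ s, ∑ t,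
          η ρ ν * B α γ ρ * (η κ β * (η s t * B ν β s * u t) * v κ) := by
    refine Finset.sum_congr rfl fun ρ _ => Finset.sum_congr rfl fun ν _ => ?_
    simp only [Finset.mul_sum, Finset.sum_mul]
  have L2 : (∑ ν, ∑ β, ∑ p, ∑ q, ∑ s, ∑ t,
        η ν β * (η s t * B γ β s * u t) * (η p q * B α ν p * v q))
      = ∑ s, ∑ t, ∑ p, ∑ q, ∑ δ, ∑ e,
          η s t * η p q * u t * v q * (B γ s δ * η δ e * B e α p) := by
    rw [sum6, sum6]
    refine Fintype.sum_bijective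
      (fun z : X6 n => ((z.2.2.2.2.1, z.2.2.2.2.2, z.2.2.1, z.2.2.2.1, z.2.1, z.1) : X6 n))
      (Equiv.mk
        (fun z : X6 n => ((z.2.2.2.2.1, z.2.2.2.2.2, z.2.2.1, z.2.2.2.1, z.2.1, z.1) : X6 n))
        (fun w => (w.2.2.2.2.2, w.2.2.2.2.1, w.2.2.1, w.2.2.2.1, w.1, w.2.1))
        (fun z => rfl) (fun w => rfl)).bijective
      _ _ (fun z => ?_)
    obtain ⟨ν, β, p, q, s, t⟩ := z
    show η ν β * (η s t * B γ β s * u t) * (η p q * B α ν p * v q)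
        = η s t * η p q * u t * v q * (B γ s β * η β ν * B ν α p)
    rw [hB23 γ β s, hB12 α ν p, hη ν β]; ring
  have R2 : (∑ ρ, ∑ ν, ∑ κ, ∑ β, ∑ s, ∑ t,
        η ρ ν * B α γ ρ * (η κ β * (η s t * B ν β s * u t) * v κ))
      = ∑ s, ∑ t, ∑ p, ∑ q, ∑ δ, ∑ e,
          η s t * η p q * u t * v q * (B α γ δ * η δ e * B e p s) := by
    rw [sum6, sum6]
    refine Fintype.sum_bijective
      (fun z : X6 n => ((z.2.2.2.2.1, z.2.2.2.2.2, z.2.2.2.1, z.2.2.1, z.1, z.2.1) : X6 n))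
      (Equiv.mk
        (fun z : X6 n => ((z.2.2.2.2.1, z.2.2.2.2.2, z.2.2.2.1, z.2.2.1, z.1, z.2.1) : X6 n))
        (fun w => (w.2.2.2.2.1, w.2.2.2.2.2, w.2.2.2.1, w.2.2.1, w.1, w.2.1))
        (fun z => rfl) (fun w => rfl)).bijective
      _ _ (fun z => ?_)
    obtain ⟨ρ, ν, κ, β, s, t⟩ := z
    show η ρ ν * B α γ ρ * (η κ β * (η s t * B ν β s * u t) * v κ)
        = η s t * η β κ * u t * v κ * (B α γ ρ * η ρ ν * B ν β s)
    rw [hη κ β]; ring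
  have M1 : (∑ s, ∑ t, ∑ p, ∑ q, η s t * η p q * u t * v q
        * (∑ δ, ∑ e, B γ s δ * η δ e * B e α p))
      = ∑ s, ∑ t, ∑ p, ∑ q, η s t * η p q * u t * v q
          * (∑ δ, ∑ e, B α γ δ * η δ e * B e p s) := by
    refine Finset.sum_congr rfl fun s _ => Finset.sum_congr rfl fun t _ =>
      Finset.sum_congr rfl fun p _ => Finset.sum_congr rfl fun q _ => ?_
    rw [key s p]
  calc ∑ ν, ∑ β, η ν β * (∑ s, ∑ t, η s t * B γ β s * u t)
        * (∑ p, ∑ q, η p q * B α ν p * v q)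
      = ∑ ν, ∑ β, ∑ p, ∑ q, ∑ s, ∑ t,
          η ν β * (η s t * B γ β s * u t) * (η p q * B α ν p * v q) := L1
    _ = ∑ s, ∑ t, ∑ p, ∑ q, ∑ δ, ∑ e,
          η s t * η p q * u t * v q * (B γ s δ * η δ e * B e α p) := L2
    _ = ∑ s, ∑ t, ∑ p, ∑ q, η s t * η p q * u t * v q
          * (∑ δ, ∑ e, B γ s δ * η δ e * B e α p) := T1.symm
    _ = ∑ s, ∑ t, ∑ p, ∑ q, η s t * η p q * u t * v q
          * (∑ δ, ∑ e, B α γ δ * η δ e * B e p s) := M1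
    _ = ∑ s, ∑ t, ∑ p, ∑ q, ∑ δ, ∑ e,
          η s t * η p q * u t * v q * (B α γ δ * η δ e * B e p s) := T2
    _ = ∑ ρ, ∑ ν, ∑ κ, ∑ β, ∑ s, ∑ t,
          η ρ ν * B α γ ρ * (η κ β * (η s t * B ν β s * u t) * v κ) := R2.symm
    _ = ∑ ρ, ∑ ν, η ρ ν * B α γ ρ
          * (∑ κ, ∑ β, η κ β * (∑ s, ∑ t, η s t * B ν β s * u t) * v κ) := R1.symm

end Helpers

/-- the pair `(G, Ξ)` with `G = χ_λ` and
`Ξ = (λμ/(λ+μ)) η^{νβ} ∂_β χ_λ ∂_ν χ_μ` satisfies the linearization of the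
Gauss–Manin equations with parameter `μ`. -/
theorem extended_flow_gauss_manin
    {n : ℕ} (hn : 1 ≤ n)
    (η : Matrix (Fin n) (Fin n) ℝ)
    (hηsymm : ∀ α β, η α β = η β α)
    (hηinv : IsUnit η.det)
    (F χl χm : (Fin n → ℝ) → ℝ) (lam mu : ℝ)
    (hlm : lam + mu ≠ 0)
    (hF : ContDiff ℝ (⊤ : ℕ∞) F)
    (hχl : ContDiff ℝ (⊤ : ℕ∞) χl)
    (hχm : ContDiff ℝ (⊤ : ℕ∞) χm)
    (hWDVV : ∀ α β ν ρ, ∀ x : Fin n → ℝ,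
      ∑ δ, ∑ γ, pd α (pd β (pd δ F)) x * η δ γ * pd γ (pd ν (pd ρ F)) x
        = ∑ δ, ∑ γ, pd α (pd ν (pd δ F)) x * η δ γ * pd γ (pd β (pd ρ F)) x)
    (hGMl : ∀ α γ, ∀ x : Fin n → ℝ,
      pd α (pd γ χl) x
        = lam * ∑ ρ, ∑ ν, η ρ ν * pd α (pd γ (pd ρ F)) x * pd ν χl x)
    (hGMm : ∀ α γ, ∀ x : Fin n → ℝ,
      pd α (pd γ χm) x
        = mu * ∑ ρ, ∑ ν, η ρ ν * pd α (pd γ (pd ρ F)) x * pd ν χm x) :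
    ∀ α γ, ∀ x : Fin n → ℝ,
      pd α (pd γ (fun y =>
          (lam * mu / (lam + mu)) * ∑ ν, ∑ β, η ν β * pd β χl y * pd ν χm y)) x
        = mu * (∑ ρ, ∑ ν, η ρ ν * pd α (pd γ (pd ρ χl)) x * pd ν χm x)
          + mu * (∑ ρ, ∑ ν, η ρ ν * pd α (pd γ (pd ρ F)) x
              * pd ν (fun y =>
                  (lam * mu / (lam + mu)) * ∑ κ, ∑ β, η κ β * pd β χl y * pd κ χm y) x) := by
  intro α γ x
  have hGMl' : ∀ a b (y : Fin n → ℝ), pd a (pd b χl) y = lam * PP η F χl a b y :=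
    fun a b y => hGMl a b y
  have hGMm' : ∀ a b (y : Fin n → ℝ), pd a (pd b χm) y = mu * PP η F χm a b y :=
    fun a b y => hGMm a b y
  have hA23 : ∀ (a b c : Fin n) (y : Fin n → ℝ),
      pd a (pd b (pd c F)) y = pd a (pd c (pd b F)) y := by
    intro a b c y
    have hfun : pd b (pd c F) = pd c (pd b F) := funext fun z => pd_comm hF b c z
    rw [hfun]
  have hA12 : ∀ (a b c : Fin n) (y : Fin n → ℝ),
      pd a (pd b (pd c F)) y = pd b (pd a (pd c F)) y :=
    fun a b c y => pd_comm (contDiff_pd hF c) a b y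
  set c : ℝ := lam * mu / (lam + mu) with hcdef
  -- Step A : first derivative of Xi
  have stepA : ∀ (δ : Fin n) (y : Fin n → ℝ),
      pd δ (Xi η χl χm c) y = lam * mu * TT η F χl χm δ y := by
    intro δ y
    have hbil : Differentiable ℝ (fun z => ∑ ν, ∑ β, η ν β * pd β χl z * pd ν χm z) :=
      (contDiff_bilin η hχl hχm).differentiable (by simp)
    have e1 : pd δ (Xi η χl χm c) y
        = c * pd δ (fun z => ∑ ν, ∑ β, η ν β * pd β χl z * pd ν χm z) y :=
      pd_const_mul hbil c δ y
    have e2 : pd δ (fun z => ∑ ν, ∑ β, η ν β * pd β χl z * pd ν χm z) y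
        = ∑ ν, ∑ β, η ν β * (pd δ (pd β χl) y * pd ν χm y + pd β χl y * pd δ (pd ν χm) y) :=
      pd_bilin η hχl hχm δ y
    have e3 : (∑ ν, ∑ β, η ν β
          * (pd δ (pd β χl) y * pd ν χm y + pd β χl y * pd δ (pd ν χm) y))
        = ∑ ν, ∑ β, (lam * (η ν β * PP η F χl δ β y * pd ν χm y)
            + mu * (η ν β * pd β χl y * PP η F χm δ ν y)) := by
      refine Finset.sum_congr rfl fun ν _ => Finset.sum_congr rfl fun β _ => ?_
      rw [hGMl' δ β y, hGMm' δ ν y]; ring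
    have e4 : (∑ ν, ∑ β, (lam * (η ν β * PP η F χl δ β y * pd ν χm y)
          + mu * (η ν β * pd β χl y * PP η F χm δ ν y)))
        = lam * (∑ ν, ∑ β, η ν β * PP η F χl δ β y * pd ν χm y)
          + mu * (∑ ν, ∑ β, η ν β * pd β χl y * PP η F χm δ ν y) := by
      simp only [Finset.sum_add_distrib, Finset.mul_sum]
    have e5 : (∑ ν, ∑ β, η ν β * pd β χl y * PP η F χm δ ν y)
        = ∑ ν, ∑ β, η ν β * PP η F χl δ β y * pd ν χm y :=
      IL1 η hηsymm (fun a b => pd δ (pd a (pd b F)) y) (fun a b => hA23 δ a b y)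
        (fun t => pd t χl y) (fun t => pd t χm y)
    have e6 : pd δ (Xi η χl χm c) y
        = c * ((lam + mu) * (∑ ν, ∑ β, η ν β * PP η F χl δ β y * pd ν χm y)) := by
      rw [e1, e2, e3, e4, e5]; ring
    have hc : c * (lam + mu) = lam * mu := div_mul_cancel₀ _ hlm
    calc pd δ (Xi η χl χm c) y
        = c * (lam + mu) * (∑ ν, ∑ β, η ν β * PP η F χl δ β y * pd ν χm y) := by
          rw [e6]; ring
      _ = lam * mu * TT η F χl χm δ y := by rw [hc]; rfl
  -- abbreviations for the final assembly
  show pd α (pd γ (Xi η χl χm c)) x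
      = mu * (∑ ρ, ∑ ν, η ρ ν * pd α (pd γ (pd ρ χl)) x * pd ν χm x)
        + mu * (∑ ρ, ∑ ν, η ρ ν * pd α (pd γ (pd ρ F)) x * pd ν (Xi η χl χm c) x)
  have hS1 : (∑ ν, ∑ β, η ν β * pd α (PP η F χl γ β) x * pd ν χm x)
      = ∑ ρ, ∑ ν, η ρ ν * pd α (PP η F χl γ ρ) x * pd ν χm x :=
    CL1 η hηsymm (fun b => pd α (PP η F χl γ b) x) (fun a => pd a χm x)
  have hS3 : (∑ ν, ∑ β, η ν β * PP η F χl γ β x * PP η F χm α ν x)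
      = ∑ ρ, ∑ ν, η ρ ν * pd α (pd γ (pd ρ F)) x * TT η F χl χm ν x :=
    IL2 η hηsymm (fun a b d => pd a (pd b (pd d F)) x)
      (fun a b d => hA12 a b d x) (fun a b d => hA23 a b d x)
      (fun a b d e => hWDVV a b d e x)
      (fun t => pd t χl x) (fun t => pd t χm x) α γ
  -- left-hand side
  have hXiγ : pd γ (Xi η χl χm c) = fun y => lam * mu * TT η F χl χm γ y :=
    funext fun y => stepA γ y
  have hL : pd α (pd γ (Xi η χl χm c)) x
      = lam * mu * ((∑ ν, ∑ β, η ν β * pd α (PP η F χl γ β) x * pd ν χm x)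
          + mu * (∑ ν, ∑ β, η ν β * PP η F χl γ β x * PP η F χm α ν x)) := by
    have l1 : pd α (pd γ (Xi η χl χm c)) x
        = lam * mu * pd α (TT η F χl χm γ) x := by
      rw [hXiγ]
      exact pd_const_mul ((contDiff_TT η hF hχl hχm γ).differentiable (by simp)) _ α x
    have l2 : pd α (TT η F χl χm γ) x
        = ∑ ν, ∑ β, η ν β * (pd α (PP η F χl γ β) x * pd ν χm x
            + PP η F χl γ β x * pd α (pd ν χm) x) :=
      pd_TT η hF hχl hχm α γ x
    have l3 : (∑ ν, ∑ β, η ν β * (pd α (PP η F χl γ β) x * pd ν χm x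
          + PP η F χl γ β x * pd α (pd ν χm) x))
        = ∑ ν, ∑ β, (η ν β * pd α (PP η F χl γ β) x * pd ν χm x
            + mu * (η ν β * PP η F χl γ β x * PP η F χm α ν x)) := by
      refine Finset.sum_congr rfl fun ν _ => Finset.sum_congr rfl fun β _ => ?_
      rw [hGMm' α ν x]; ring
    have l4 : (∑ ν, ∑ β, (η ν β * pd α (PP η F χl γ β) x * pd ν χm x
          + mu * (η ν β * PP η F χl γ β x * PP η F χm α ν x)))
        = (∑ ν, ∑ β, η ν β * pd α (PP η F χl γ β) x * pd ν χm x)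
          + mu * (∑ ν, ∑ β, η ν β * PP η F χl γ β x * PP η F χm α ν x) := by
      simp only [Finset.sum_add_distrib, Finset.mul_sum]
    rw [l1, l2, l3, l4]
  -- right-hand side
  have h3l : ∀ ρ, pd α (pd γ (pd ρ χl)) x = lam * pd α (PP η F χl γ ρ) x := by
    intro ρ
    have hfun : pd γ (pd ρ χl) = fun y => lam * PP η F χl γ ρ y :=
      funext fun y => hGMl' γ ρ y
    rw [hfun]
    exact pd_const_mul ((contDiff_PP η hF hχl γ ρ).differentiable (by simp)) lam α x
  have hR : mu * (∑ ρ, ∑ ν, η ρ ν * pd α (pd γ (pd ρ χl)) x * pd ν χm x)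
        + mu * (∑ ρ, ∑ ν, η ρ ν * pd α (pd γ (pd ρ F)) x * pd ν (Xi η χl χm c) x)
      = mu * (lam * (∑ ρ, ∑ ν, η ρ ν * pd α (PP η F χl γ ρ) x * pd ν χm x))
        + mu * (lam * mu
            * (∑ ρ, ∑ ν, η ρ ν * pd α (pd γ (pd ρ F)) x * TT η F χl χm ν x)) := by
    have r1 : (∑ ρ, ∑ ν, η ρ ν * pd α (pd γ (pd ρ χl)) x * pd ν χm x)
        = lam * (∑ ρ, ∑ ν, η ρ ν * pd α (PP η F χl γ ρ) x * pd ν χm x) := by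
      simp only [Finset.mul_sum]
      refine Finset.sum_congr rfl fun ρ _ => Finset.sum_congr rfl fun ν _ => ?_
      rw [h3l ρ]; ring
    have r2 : (∑ ρ, ∑ ν, η ρ ν * pd α (pd γ (pd ρ F)) x * pd ν (Xi η χl χm c) x)
        = lam * mu * (∑ ρ, ∑ ν, η ρ ν * pd α (pd γ (pd ρ F)) x * TT η F χl χm ν x) := by
      simp only [Finset.mul_sum]
      refine Finset.sum_congr rfl fun ρ _ => Finset.sum_congr rfl fun ν _ => ?_
      rw [stepA ν x]; ring
    rw [r1, r2]
  rw [hL, hR, hS1, hS3]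
  ring
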